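/- arXiv:1401.8242 — 3 statements merged into one kernel-verified Lean document; each statement's English description precedes it below -/
import Mathlib

section
/- The set of strings { T T W^(6q-2) U^(3q) : q ∈ ℕ, q ≥ 1 } over the alphabet {T, W, U} is not a regular language. -/
/-- The alphabet {T, W, U} for tie-knot strings. -/
inductive TieSym : Type
  | T : TieSym
  | W : TieSym
  | U : TieSym
  deriving DecidableEq

open TieSym

/-- The language { T·T·W^(6q-2)·U^(3q) : q ≥ 1 } over {T, W, U} is not regular. -/
theorem tie_language_not_regular :
    ¬ Language.IsRegular
        {w : List TieSym | ∃ q : ℕ, 1 ≤ q ∧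
          w = [T, T] ++ List.replicate (6 * q - 2) W ++ List.replicate (3 * q) U} := by
  rintro ⟨σ, _, M, hM⟩
  set L : Language TieSym := {w : List TieSym | ∃ q : ℕ, 1 ≤ q ∧
          w = [T, T] ++ List.replicate (6 * q - 2) W ++ List.replicate (3 * q) U} with hL
  -- key: membership determines q via counting
  have key : ∀ q q' : ℕ, 1 ≤ q → 1 ≤ q' →
      ([T, T] ++ List.replicate (6 * q - 2) W ++ List.replicate (3 * q') U ∈ L ↔ q = q') := by
    intro q q' hq hq'
    constructor
    · rintro ⟨r, hr, heq⟩
      have hW := congrArg (List.count W) heq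
      have hU := congrArg (List.count U) heq
      simp [List.count_replicate] at hW hU
      omega
    · rintro rfl
      exact ⟨q, hq, rfl⟩
  have hf : Function.Injective (fun q : ℕ =>
      M.eval ([T, T] ++ List.replicate (6 * (q + 1) - 2) W)) := by
    intro a b hab
    simp only at hab
    have h1 : [T, T] ++ List.replicate (6 * (a + 1) - 2) W ++ List.replicate (3 * (a + 1)) U
        ∈ M.accepts := by
      rw [hM]; exact ⟨a + 1, by omega, rfl⟩
    have h2 : [T, T] ++ List.replicate (6 * (b + 1) - 2) W ++ List.replicate (3 * (a + 1)) U
        ∈ M.accepts := by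
      rw [DFA.mem_accepts] at h1 ⊢
      rwa [DFA.eval, DFA.evalFrom_of_append, ← DFA.eval, hab, DFA.eval,
        ← DFA.evalFrom_of_append] at h1
    rw [hM] at h2
    have := (key (b + 1) (a + 1) (by omega) (by omega)).mp h2
    omega
  exact _root_.not_injective_infinite_finite _ hf
end

section
/- Any language L over alphabet {T, W, U} such that for all q ≥ 1 the word TTW^(6q-2)U^(3q) ∈ L, and such that every word in L has at most as many U's as can be matched by the tuck-depth constraint (specifically, every word w ∈ L satisfies #U(w) ≤ (#T(w) + #W(w))/2), is not regular. -/
open TieSym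

theorem Language.IsRegular.exists_pumping_down {α : Type*} {L : Language α} (hL : L.IsRegular) :
    ∃ N : ℕ, ∀ x ∈ L, N ≤ x.length →
      ∃ a b c, x = a ++ b ++ c ∧ b ≠ [] ∧ b <:+: x.take N ∧ a ++ c ∈ L := by
  obtain ⟨σ, _, M, rfl⟩ := hL
  refine ⟨Fintype.card σ, fun x hx hlen => ?_⟩
  obtain ⟨a, b, c, rfl, hab, hb, hpump⟩ := M.pumping_lemma hx hlen
  refine ⟨a, b, c, rfl, hb, ?_, hpump ?_⟩
  · have hprefix : a ++ b <+: (a ++ b ++ c).take (Fintype.card σ) :=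
      List.prefix_take_iff.2 ⟨List.prefix_append _ _, by simpa using hab⟩
    exact (List.infix_append a b []).trans (by simpa using hprefix.isInfix)
  · exact Language.mem_mul.2 ⟨a, Language.mem_mul.2 ⟨a, rfl, [], Language.nil_mem_kstar _,
      List.append_nil a⟩, c, rfl, rfl⟩

namespace TieSym

theorem count_T_add_count_W_add_count_U (w : List TieSym) :
    w.count T + w.count W + w.count U = w.length := by
  induction w with
  | nil => rfl
  | cons a w ih => cases a <;> grind

theorem count_T_add_count_W_pos {w : List TieSym} (hw : w ≠ []) (hU : w.count U = 0) :
    0 < w.count T + w.count W := by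
  have := count_T_add_count_W_add_count_U w
  have := List.length_pos_iff.2 hw
  omega

def deeperTuckedWord (q : ℕ) : List TieSym :=
  [T, T] ++ List.replicate (6 * q - 2) W ++ List.replicate (3 * q) U

variable {q : ℕ}

theorem count_U_deeperTuckedWord : (deeperTuckedWord q).count U = 3 * q := by
  simp [deeperTuckedWord, List.count_replicate]

theorem count_T_add_count_W_deeperTuckedWord (hq : 1 ≤ q) :
    (deeperTuckedWord q).count T + (deeperTuckedWord q).count W = 6 * q := by
  grind [deeperTuckedWord]

theorem length_deeperTuckedWord (hq : 1 ≤ q) : (deeperTuckedWord q).length = 9 * q := by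
  grind [deeperTuckedWord]

theorem count_U_take_deeperTuckedWord {n : ℕ} (hn : n ≤ 6 * q) :
    ((deeperTuckedWord q).take n).count U = 0 := by
  have hprefix : (deeperTuckedWord q).take n <+: [T, T] ++ List.replicate (6 * q - 2) W :=
    List.prefix_of_prefix_length_le (List.take_prefix _ _) (List.prefix_append _ _)
      (by grind [deeperTuckedWord])
  refine Nat.eq_zero_of_le_zero ((hprefix.count_le U).trans ?_)
  simp [List.count_replicate]

end TieSym

/-- Any language over {T, W, U} containing all words `T·T·W^(6q-2)·U^(3q)` (q ≥ 1) and in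
which every word satisfies the tuck-depth constraint `#U ≤ (#T + #W)/2`
(i.e. `2·#U ≤ #T + #W`) is not regular. -/
theorem deeper_tucked_not_regular (L : Language TieSym)
    (hmem : ∀ q : ℕ, 1 ≤ q →
      ([T, T] ++ List.replicate (6 * q - 2) W ++ List.replicate (3 * q) U) ∈ L)
    (hconstraint : ∀ w ∈ L, 2 * w.count U ≤ w.count T + w.count W) :
    ¬ L.IsRegular := by
  intro hL
  obtain ⟨N, hpump⟩ := hL.exists_pumping_down
  have hq : 1 ≤ N + 1 := Nat.le_add_left 1 N
  obtain ⟨a, b, c, hx, hb, hinfix, hac⟩ :=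
    hpump (deeperTuckedWord (N + 1)) (hmem (N + 1) hq)
      (by rw [TieSym.length_deeperTuckedWord hq]; omega)
  have hbU : b.count U = 0 := Nat.eq_zero_of_le_zero <| (hinfix.count_le U).trans_eq
    (TieSym.count_U_take_deeperTuckedWord (by omega))
  have hbTW := TieSym.count_T_add_count_W_pos hb hbU
  have hU := TieSym.count_U_deeperTuckedWord (q := N + 1)
  have hTW := TieSym.count_T_add_count_W_deeperTuckedWord hq
  have hacTW := hconstraint (a ++ c) hac
  rw [hx] at hU hTW
  simp only [List.count_append] at hU hTW hacTW
  omega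
end

section
/- The sum of the coefficients of z^3 through z^13 in the power series expansion of 2z^3(2z+1)/(1-6z^2) equals 24882. -/
/-! Rescaling the geometric series `1/(1 - z)` by `a` and substituting `z ↦ z^k` gives
`1/(1 - a z^k) = ∑ a^m z^(k m)`. Hence `1/(1 - 6z^2)` has coefficients `6^m` in even degrees, and the
coefficients of `2z^3(2z+1)/(1-6z^2)` in degrees 3 to 13 are read off and summed. -/

open PowerSeries

namespace PowerSeries

theorem mk_pow_mul_one_sub_C_mul_X {R : Type*} [CommRing R] (a : R) :
    (mk fun n => a ^ n) * (1 - C a * X) = 1 := by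
  simpa [rescale_mk, rescale_X] using congrArg (rescale a) (mk_one_mul_one_sub_eq_one (S := R))

theorem expand_mk_pow_mul_one_sub_C_mul_X_pow {R : Type*} [CommRing R] {k : ℕ} (hk : k ≠ 0)
    (a : R) : expand k hk (mk fun n => a ^ n) * (1 - C a * X ^ k) = 1 := by
  simpa [expand_C, expand_X] using congrArg (expand k hk) (mk_pow_mul_one_sub_C_mul_X a)

theorem coeff_inv_one_sub_C_mul_X_pow {K : Type*} [Field K] {k : ℕ} (hk : k ≠ 0) (a : K)
    (n : ℕ) : coeff n (1 - C a * X ^ k)⁻¹ = if k ∣ n then a ^ (n / k) else 0 := by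
  rw [(inv_eq_iff_mul_eq_one (by simp [hk])).2 (expand_mk_pow_mul_one_sub_C_mul_X_pow hk a),
    coeff_expand, coeff_mk]

end PowerSeries

/-- The sum of the coefficients of `z^3` through `z^13` in `2z^3(2z+1)/(1-6z^2)`
equals 24882. -/
theorem single_tuck_total :
    (∑ n ∈ Finset.Icc (3 : ℕ) 13,
      PowerSeries.coeff (R := ℚ) n ((2 * X ^ 3 * (2 * X + 1) : ℚ⟦X⟧) * (1 - 6 * X ^ 2)⁻¹)) =
      24882 := by
  have hden : (1 - 6 * X ^ 2 : ℚ⟦X⟧) = 1 - C 6 * X ^ 2 := by rw [map_ofNat]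
  have hnum : (2 * X ^ 3 * (2 * X + 1) : ℚ⟦X⟧) = C 4 * X ^ 4 + C 2 * X ^ 3 := by
    simp only [map_ofNat]; ring
  simp only [hden, hnum, add_mul, mul_assoc, map_add, coeff_C_mul, coeff_X_pow_mul',
    coeff_inv_one_sub_C_mul_X_pow two_ne_zero]
  norm_num [Finset.sum_Icc_succ_top, Nat.dvd_iff_mod_eq_zero]
end
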